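/- Let w ∈ ℝ³ be a nonzero vector and let S₂ = {x ∈ ℝ³ : ‖x − w/2‖ = ‖w/2‖} be the sphere with diameter segment from 0 to w. Then for all real α, β: max over x₁, x₂ ∈ S₂ of (α‖x₁−x₂‖² + β‖x₁+x₂‖²) equals ‖w‖²·α²/(α−β) if α ≥ max(0, 2β), and equals ‖w‖²·max(0, 4β, α+β) otherwise. Moreover, in the case α > 0 ≥ β, the value ‖w‖²·α²/(α−β) is attained exactly at those pairs x₁, x₂ ∈ S₂ satisfying x₁ + x₂ = (α/(α−β))·w. -/

import Mathlib

open RealInnerProductSpace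


/-- The sphere in `ℝ³` having the segment from `0` to `w` as a diameter. -/
def diamSphere (w : EuclideanSpace ℝ (Fin 3)) : Set (EuclideanSpace ℝ (Fin 3)) :=
  {x | ‖x - (2 : ℝ)⁻¹ • w‖ = ‖(2 : ℝ)⁻¹ • w‖}

lemma mem_diamSphere_iff {w x : EuclideanSpace ℝ (Fin 3)} :
    x ∈ diamSphere w ↔ ‖x‖ ^ 2 = ⟪x, w⟫ := by
  simp only [diamSphere, Set.mem_setOf_eq]
  constructor
  · intro h
    have h2 : ‖x - (2 : ℝ)⁻¹ • w‖ ^ 2 = ‖(2 : ℝ)⁻¹ • w‖ ^ 2 := by rw [h]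
    rw [norm_sub_sq_real, real_inner_smul_right] at h2
    linarith
  · intro h
    have h2 : ‖x - (2 : ℝ)⁻¹ • w‖ ^ 2 = ‖(2 : ℝ)⁻¹ • w‖ ^ 2 := by
      rw [norm_sub_sq_real, real_inner_smul_right]; linarith
    exact (sq_eq_sq₀ (norm_nonneg _) (norm_nonneg _)).mp h2

lemma zero_mem_diamSphere (w : EuclideanSpace ℝ (Fin 3)) : (0 : EuclideanSpace ℝ (Fin 3)) ∈ diamSphere w := by
  simp [mem_diamSphere_iff]

lemma self_mem_diamSphere (w : EuclideanSpace ℝ (Fin 3)) : w ∈ diamSphere w := by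
  rw [mem_diamSphere_iff, real_inner_self_eq_norm_sq]

lemma norm_le_of_mem {w x : EuclideanSpace ℝ (Fin 3)} (h : x ∈ diamSphere w) : ‖x‖ ≤ ‖w‖ := by
  rw [mem_diamSphere_iff] at h
  have h2 : ⟪x, w⟫ ≤ ‖x‖ * ‖w‖ := real_inner_le_norm x w
  nlinarith [norm_nonneg x, norm_nonneg w]

lemma key_relation {w x₁ x₂ : EuclideanSpace ℝ (Fin 3)}
    (h₁ : x₁ ∈ diamSphere w) (h₂ : x₂ ∈ diamSphere w) :
    ‖x₁ - x₂‖ ^ 2 = 2 * ⟪x₁ + x₂, w⟫ - ‖x₁ + x₂‖ ^ 2 := by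
  rw [mem_diamSphere_iff] at h₁ h₂
  rw [norm_sub_sq_real, norm_add_sq_real, inner_add_left]
  linarith

lemma exists_perp (w : EuclideanSpace ℝ (Fin 3)) (hw : w ≠ 0) (m : ℝ) (hm : 0 ≤ m) :
    ∃ e : EuclideanSpace ℝ (Fin 3), ⟪e, w⟫ = 0 ∧ ‖e‖ ^ 2 = m := by
  have h1 : Module.finrank ℝ (ℝ ∙ w) = 1 := finrank_span_singleton hw
  have h2 := Submodule.finrank_add_finrank_orthogonal (K := (ℝ ∙ w))
  have h3 : Module.finrank ℝ (EuclideanSpace ℝ (Fin 3)) = 3 := finrank_euclideanSpace_fin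
  have hpos : 0 < Module.finrank ℝ ((ℝ ∙ w)ᗮ : Submodule ℝ (EuclideanSpace ℝ (Fin 3))) := by omega
  obtain ⟨u, hu⟩ := Module.finrank_pos_iff_exists_ne_zero.mp hpos
  have huw : ⟪(u : EuclideanSpace ℝ (Fin 3)), w⟫ = 0 := by
    have := u.2
    rw [Submodule.mem_orthogonal] at this
    rw [real_inner_comm]
    exact this w (Submodule.mem_span_singleton_self w)
  have hu0 : ‖(u : EuclideanSpace ℝ (Fin 3))‖ ≠ 0 := by
    simpa [Submodule.coe_eq_zero] using hu
  refine ⟨(Real.sqrt m / ‖(u : EuclideanSpace ℝ (Fin 3))‖) • u, ?_, ?_⟩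
  · rw [real_inner_smul_left, huw, mul_zero]
  · rw [norm_smul, Real.norm_eq_abs, abs_div, abs_of_nonneg (Real.sqrt_nonneg m),
      abs_of_nonneg (norm_nonneg _), div_mul_cancel₀ _ hu0, Real.sq_sqrt hm]

lemma exists_pair (w : EuclideanSpace ℝ (Fin 3)) (hw : w ≠ 0) (c : ℝ)
    (h0 : 0 ≤ c) (hc2 : c ≤ 2) :
    ∃ x₁ ∈ diamSphere w, ∃ x₂ ∈ diamSphere w, x₁ + x₂ = c • w ∧
      ‖x₁ - x₂‖ ^ 2 = (2 * c - c ^ 2) * ‖w‖ ^ 2 := by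
  have hW : (0:ℝ) < ‖w‖ := norm_pos_iff.mpr hw
  set m : ℝ := (1 - (c - 1) ^ 2) * ‖w‖ ^ 2 / 4 with hm_def
  have hm : 0 ≤ m := by
    have : 0 ≤ 1 - (c - 1) ^ 2 := by nlinarith
    positivity
  obtain ⟨e, hew, hem⟩ := exists_perp w hw m hm
  have hwe : ⟪w, e⟫ = 0 := by rw [real_inner_comm]; exact hew
  have hns : ‖(c / 2) • w‖ ^ 2 = (c / 2) ^ 2 * ‖w‖ ^ 2 := by
    rw [norm_smul, Real.norm_eq_abs, mul_pow, sq_abs]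
  refine ⟨(c / 2) • w + e, ?_, (c / 2) • w - e, ?_, ?_, ?_⟩
  · rw [mem_diamSphere_iff, norm_add_sq_real, inner_add_left, real_inner_smul_left,
      real_inner_smul_left, real_inner_self_eq_norm_sq, hwe, hew, hns, hem, hm_def]
    ring
  · rw [mem_diamSphere_iff, norm_sub_sq_real, inner_sub_left, real_inner_smul_left,
      real_inner_smul_left, real_inner_self_eq_norm_sq, hwe, hew, hns, hem, hm_def]
    ring
  · module
  · have hd : (c / 2) • w + e - ((c / 2) • w - e) = (2:ℝ) • e := by module
    rw [hd, norm_smul, Real.norm_eq_abs, mul_pow, sq_abs, hem, hm_def]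
    ring

lemma norm_decomp (w s : EuclideanSpace ℝ (Fin 3)) (hw : w ≠ 0) :
    ‖s - (⟪s, w⟫ / ‖w‖ ^ 2) • w‖ ^ 2 = ‖s‖ ^ 2 - ⟪s, w⟫ ^ 2 / ‖w‖ ^ 2 := by
  have hW : (0:ℝ) < ‖w‖ := norm_pos_iff.mpr hw
  rw [norm_sub_sq_real, real_inner_smul_right, norm_smul, Real.norm_eq_abs, mul_pow, sq_abs]
  field_simp
  ring

lemma ub1 {w : EuclideanSpace ℝ (Fin 3)} (hw : w ≠ 0) {α β : ℝ} (hα : 0 ≤ α) (hba : β < α)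
    {x₁ x₂ : EuclideanSpace ℝ (Fin 3)} (h₁ : x₁ ∈ diamSphere w) (h₂ : x₂ ∈ diamSphere w) :
    α * ‖x₁ - x₂‖ ^ 2 + β * ‖x₁ + x₂‖ ^ 2 ≤ ‖w‖ ^ 2 * (α ^ 2 / (α - β)) ∧
    (α * ‖x₁ - x₂‖ ^ 2 + β * ‖x₁ + x₂‖ ^ 2 = ‖w‖ ^ 2 * (α ^ 2 / (α - β)) ↔
      x₁ + x₂ = (α / (α - β)) • w) := by
  have hW : (0:ℝ) < ‖w‖ := norm_pos_iff.mpr hw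
  have hab : (0:ℝ) < α - β := sub_pos.mpr hba
  obtain ⟨q, hq_def⟩ : ∃ q, ⟪x₁ + x₂, w⟫ = q := ⟨_, rfl⟩
  obtain ⟨e, he_def⟩ : ∃ e, x₁ + x₂ - (q / ‖w‖ ^ 2) • w = e := ⟨_, rfl⟩
  have hd : ‖x₁ - x₂‖ ^ 2 = 2 * q - ‖x₁ + x₂‖ ^ 2 := by
    rw [← hq_def]; exact key_relation h₁ h₂
  have hE : ‖e‖ ^ 2 = ‖x₁ + x₂‖ ^ 2 - q ^ 2 / ‖w‖ ^ 2 := by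
    have := norm_decomp w (x₁ + x₂) hw
    rw [hq_def, he_def] at this
    exact this
  have hid : ‖w‖ ^ 2 * (α ^ 2 / (α - β)) - (α * ‖x₁ - x₂‖ ^ 2 + β * ‖x₁ + x₂‖ ^ 2) =
      (α - β) * ‖e‖ ^ 2 + ((α - β) / ‖w‖ ^ 2) * (q - α * ‖w‖ ^ 2 / (α - β)) ^ 2 := by
    rw [hd, hE]
    field_simp
    ring
  have ht1 : 0 ≤ (α - β) * ‖e‖ ^ 2 := by positivity
  have ht2 : 0 ≤ ((α - β) / ‖w‖ ^ 2) * (q - α * ‖w‖ ^ 2 / (α - β)) ^ 2 := by positivity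
  constructor
  · linarith
  constructor
  · intro heq
    have h0 : (α - β) * ‖e‖ ^ 2 + ((α - β) / ‖w‖ ^ 2) * (q - α * ‖w‖ ^ 2 / (α - β)) ^ 2 = 0 := by
      linarith
    have he0 : ‖e‖ ^ 2 = 0 := by
      by_contra h
      have : 0 < (α - β) * ‖e‖ ^ 2 := by
        have : 0 < ‖e‖ ^ 2 := lt_of_le_of_ne (by positivity) (Ne.symm h)
        positivity
      linarith
    have hq0 : (q - α * ‖w‖ ^ 2 / (α - β)) ^ 2 = 0 := by
      by_contra h
      have : 0 < ((α - β) / ‖w‖ ^ 2) * (q - α * ‖w‖ ^ 2 / (α - β)) ^ 2 := by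
        have : 0 < (q - α * ‖w‖ ^ 2 / (α - β)) ^ 2 := lt_of_le_of_ne (by positivity) (Ne.symm h)
        positivity
      linarith
    have he0' : e = 0 := by
      have := pow_eq_zero_iff (n := 2) (by norm_num) |>.mp he0
      exact norm_eq_zero.mp this
    have hqval : q = α * ‖w‖ ^ 2 / (α - β) := by
      have := pow_eq_zero_iff (n := 2) (by norm_num) |>.mp hq0
      linarith [sub_eq_zero.mp this]
    have hs_eq : x₁ + x₂ = (q / ‖w‖ ^ 2) • w := by
      have hz : x₁ + x₂ - (q / ‖w‖ ^ 2) • w = 0 := by rw [he_def, he0']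
      exact sub_eq_zero.mp hz
    have hscal : q / ‖w‖ ^ 2 = α / (α - β) := by
      rw [hqval]; field_simp
    rw [hs_eq, hscal]
  · intro hsum
    have hq_val : q = α / (α - β) * ‖w‖ ^ 2 := by
      rw [← hq_def, hsum, real_inner_smul_left, real_inner_self_eq_norm_sq]
    have he0 : e = 0 := by
      rw [← he_def, hsum, hq_val]
      have hsimp : α / (α - β) * ‖w‖ ^ 2 / ‖w‖ ^ 2 = α / (α - β) := by
        field_simp
      rw [hsimp, sub_self]
    have heE : ‖e‖ ^ 2 = 0 := by rw [he0]; simp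
    have hq2 : (q - α * ‖w‖ ^ 2 / (α - β)) ^ 2 = 0 := by
      have hz : q - α * ‖w‖ ^ 2 / (α - β) = 0 := by rw [hq_val]; ring
      rw [hz]; norm_num
    rw [heE, hq2] at hid
    simp at hid
    linarith

/-- the maximum of `α‖x₁−x₂‖² + β‖x₁+x₂‖²` over the sphere with
diameter segment from `0` to `w`, together with the characterization of the
maximizers in the case `α > 0 ≥ β`. -/
theorem stmt1 (w : EuclideanSpace ℝ (Fin 3)) (hw : w ≠ 0) (α β : ℝ) :
    (α ≥ max 0 (2 * β) →
      IsGreatest {v | ∃ x₁ ∈ diamSphere w, ∃ x₂ ∈ diamSphere w,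
          v = α * ‖x₁ - x₂‖ ^ 2 + β * ‖x₁ + x₂‖ ^ 2}
        (‖w‖ ^ 2 * (α ^ 2 / (α - β)))) ∧
    (¬ (α ≥ max 0 (2 * β)) →
      IsGreatest {v | ∃ x₁ ∈ diamSphere w, ∃ x₂ ∈ diamSphere w,
          v = α * ‖x₁ - x₂‖ ^ 2 + β * ‖x₁ + x₂‖ ^ 2}
        (‖w‖ ^ 2 * max 0 (max (4 * β) (α + β)))) ∧
    (α > 0 → 0 ≥ β → ∀ x₁ ∈ diamSphere w, ∀ x₂ ∈ diamSphere w,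
      (α * ‖x₁ - x₂‖ ^ 2 + β * ‖x₁ + x₂‖ ^ 2 = ‖w‖ ^ 2 * (α ^ 2 / (α - β)) ↔
        x₁ + x₂ = (α / (α - β)) • w)) := by
  have hW : (0:ℝ) < ‖w‖ := norm_pos_iff.mpr hw
  refine ⟨?_, ?_, ?_⟩
  · -- Part 1
    intro h1
    have hα0 : 0 ≤ α := le_trans (le_max_left _ _) h1
    have h2β : 2 * β ≤ α := le_trans (le_max_right _ _) h1
    by_cases hab : α = β
    · -- then α = β = 0
      have hβ0 : β = 0 := by nlinarith
      have hα00 : α = 0 := by rw [hab, hβ0]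
      subst hβ0; subst hα00
      constructor
      · exact ⟨0, zero_mem_diamSphere w, 0, zero_mem_diamSphere w, by simp⟩
      · rintro v ⟨x₁, _, x₂, _, rfl⟩
        simp
    · have hba : β < α := by
        rcases le_or_gt β 0 with h | h
        · exact lt_of_le_of_ne (le_trans h hα0) (Ne.symm hab)
        · exact lt_of_le_of_ne (by linarith) (Ne.symm hab)
      have habp : (0:ℝ) < α - β := sub_pos.mpr hba
      constructor
      · set c := α / (α - β) with hc_def
        have h0c : 0 ≤ c := by positivity
        have hc2 : c ≤ 2 := by
          rw [hc_def, div_le_iff₀ habp]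
          linarith
        obtain ⟨x₁, hx₁, x₂, hx₂, hsum, hdiff⟩ := exists_pair w hw c h0c hc2
        refine ⟨x₁, hx₁, x₂, hx₂, ?_⟩
        rw [hsum, hdiff, norm_smul, Real.norm_eq_abs, mul_pow, sq_abs, hc_def]
        field_simp
        ring
      · rintro v ⟨x₁, hx₁, x₂, hx₂, rfl⟩
        exact (ub1 hw hα0 hba hx₁ hx₂).1
  · -- Part 2
    intro h2
    push_neg at h2
    rcases lt_max_iff.mp h2 with hαneg | hα2β
    all_goals rcases le_or_gt β 0 with hβ | hβ
    · -- α < 0, β ≤ 0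
      have hM : max 0 (max (4 * β) (α + β)) = 0 :=
        max_eq_left (max_le (by linarith) (by linarith))
      rw [hM, mul_zero]
      constructor
      · exact ⟨0, zero_mem_diamSphere w, 0, zero_mem_diamSphere w, by simp⟩
      · rintro v ⟨x₁, hx₁, x₂, hx₂, rfl⟩
        nlinarith [sq_nonneg ‖x₁ - x₂‖, sq_nonneg ‖x₁ + x₂‖]
    · -- α < 0 < β
      have hα2 : α < 2 * β := by linarith
      have hM : max 0 (max (4 * β) (α + β)) = 4 * β := by
        rw [max_eq_left (by linarith : α + β ≤ 4 * β)]
        exact max_eq_right (by linarith)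
      rw [hM]
      constructor
      · refine ⟨w, self_mem_diamSphere w, w, self_mem_diamSphere w, ?_⟩
        have h2w : w + w = (2:ℝ) • w := (two_smul ℝ w).symm
        rw [sub_self, h2w, norm_smul, norm_zero]
        simp
        ring
      · rintro v ⟨x₁, hx₁, x₂, hx₂, rfl⟩
        have hd : ‖x₁ - x₂‖ ^ 2 = 2 * ⟪x₁ + x₂, w⟫ - ‖x₁ + x₂‖ ^ 2 := key_relation hx₁ hx₂
        have hq : ⟪x₁ + x₂, w⟫ ≤ ‖x₁ + x₂‖ * ‖w‖ := real_inner_le_norm _ _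
        have hn : ‖x₁ + x₂‖ ≤ 2 * ‖w‖ := by
          calc ‖x₁ + x₂‖ ≤ ‖x₁‖ + ‖x₂‖ := norm_add_le _ _
          _ ≤ 2 * ‖w‖ := by linarith [norm_le_of_mem hx₁, norm_le_of_mem hx₂]
        nlinarith [sq_nonneg ‖x₁ - x₂‖, norm_nonneg (x₁ + x₂),
          mul_nonneg (by linarith : (0:ℝ) ≤ 2 * ‖w‖ - ‖x₁ + x₂‖)
            (by nlinarith [norm_nonneg (x₁ + x₂)] : (0:ℝ) ≤ 2 * ‖w‖ + ‖x₁ + x₂‖)]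
    · -- α < 2β, β ≤ 0 : so α < 0, β ≤ 0
      have hαneg : α < 0 := by linarith
      have hM : max 0 (max (4 * β) (α + β)) = 0 :=
        max_eq_left (max_le (by linarith) (by linarith))
      rw [hM, mul_zero]
      constructor
      · exact ⟨0, zero_mem_diamSphere w, 0, zero_mem_diamSphere w, by simp⟩
      · rintro v ⟨x₁, hx₁, x₂, hx₂, rfl⟩
        nlinarith [sq_nonneg ‖x₁ - x₂‖, sq_nonneg ‖x₁ + x₂‖]
    · -- α < 2β, β > 0
      have hM : max 0 (max (4 * β) (α + β)) = 4 * β := by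
        rw [max_eq_left (by linarith : α + β ≤ 4 * β)]
        exact max_eq_right (by linarith)
      rw [hM]
      constructor
      · refine ⟨w, self_mem_diamSphere w, w, self_mem_diamSphere w, ?_⟩
        have h2w : w + w = (2:ℝ) • w := (two_smul ℝ w).symm
        rw [sub_self, h2w, norm_smul, norm_zero]
        simp
        ring
      · rintro v ⟨x₁, hx₁, x₂, hx₂, rfl⟩
        have hd : ‖x₁ - x₂‖ ^ 2 = 2 * ⟪x₁ + x₂, w⟫ - ‖x₁ + x₂‖ ^ 2 := key_relation hx₁ hx₂
        have hq : ⟪x₁ + x₂, w⟫ ≤ ‖x₁ + x₂‖ * ‖w‖ := real_inner_le_norm _ _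
        have hn : ‖x₁ + x₂‖ ≤ 2 * ‖w‖ := by
          calc ‖x₁ + x₂‖ ≤ ‖x₁‖ + ‖x₂‖ := norm_add_le _ _
          _ ≤ 2 * ‖w‖ := by linarith [norm_le_of_mem hx₁, norm_le_of_mem hx₂]
        have hn0 : (0:ℝ) ≤ ‖x₁ + x₂‖ := norm_nonneg _
        by_cases hα0 : α ≤ 0
        · nlinarith [sq_nonneg ‖x₁ - x₂‖,
            mul_nonneg (by linarith : (0:ℝ) ≤ 2 * ‖w‖ - ‖x₁ + x₂‖)
              (by linarith : (0:ℝ) ≤ 2 * ‖w‖ + ‖x₁ + x₂‖)]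
        · push_neg at hα0
          have hsec : (α - β) * ‖x₁ + x₂‖ ≤ 2 * β * ‖w‖ := by
            rcases le_or_gt α β with h | h
            · nlinarith
            · nlinarith
          nlinarith [mul_nonneg (by linarith : (0:ℝ) ≤ 2 * ‖w‖ - ‖x₁ + x₂‖)
            (by linarith : (0:ℝ) ≤ 2 * β * ‖w‖ - (α - β) * ‖x₁ + x₂‖)]
  · -- Part 3
    intro hα hβ x₁ hx₁ x₂ hx₂
    exact (ub1 hw (le_of_lt hα) (lt_of_le_of_lt hβ hα) hx₁ hx₂).2
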